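/- (The Bicardinality Principle is not relatively elementarily equivalent) Let E be the relation on Set ℕ given by E(X,Y) := Cardinal.mk X = Cardinal.mk Y ∧ Cardinal.mk ↥(Xᶜ) = Cardinal.mk ↥(Yᶜ). Then: (a) there exists a surjective ∂₁ : Set ℕ → ℕ realizing A[E]; and (b) for every surjective ∂₁ realizing A[E], the map ∂₂ : Set ℕ → ℕ defined by ∂₂ X = 2 * (∂₁ X) also realizes A[E], and, writing A := Set.range ∂₂ and a := ∂₂ A, one has ∂₂ (A \ {a}) = a, whereas writing b := ∂₁ Set.univ one has ∂₁ (Set.univ \ {b}) ≠ b. Consequently the Bicardinality Principle is not naturally relatively categorical. -/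

import Mathlib

/-- The bicardinality relation on `Set ℕ`. -/
def Ebc (X Y : Set ℕ) : Prop :=
  Cardinal.mk X = Cardinal.mk Y ∧ Cardinal.mk ↥(Xᶜ) = Cardinal.mk ↥(Yᶜ)

/-!
The class of `X` under `Ebc` is determined by the pair `(|X|, |Xᶜ|) ∈ ℕ∞ × ℕ∞`, which takes
countably infinitely many values; hence a surjective realization `Set ℕ → ℕ` exists.
Doubling a surjective realization makes its range the set of even numbers, which is infinite
and coinfinite, and removing a point from such a set changes neither cardinality. Removing a
point from `ℕ`, by contrast, changes the cardinality of the complement from `0` to `1`.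
-/

open Set Function

def Realizes {α β : Type*} (d : α → β) (E : α → α → Prop) : Prop :=
  ∀ x y, d x = d y ↔ E x y

theorem Realizes.comp {α β γ : Type*} {d : α → β} {E : α → α → Prop} (hd : Realizes d E)
    {f : β → γ} (hf : Injective f) : Realizes (f ∘ d) E :=
  fun x y => hf.eq_iff.trans (hd x y)

theorem Realizes.exists_surjective_nat {α β : Type*} {g : α → β} {E : α → α → Prop}
    (hg : Realizes g E) (hc : (range g).Countable) (hi : (range g).Infinite) :
    ∃ d : α → ℕ, Surjective d ∧ Realizes d E := by
  have := hc.to_subtype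
  have := hi.to_subtype
  obtain ⟨e⟩ := nonempty_denumerable (range g)
  refine ⟨e.eqv ∘ rangeFactorization g,
    e.eqv.surjective.comp rangeFactorization_surjective, fun x y => ?_⟩
  simp only [comp_apply, e.eqv.apply_eq_iff_eq, rangeFactorization, Subtype.mk.injEq, hg x y]

theorem Cardinal.mk_eq_mk_iff_encard_eq {α : Type*} [Countable α] {s t : Set α} :
    Cardinal.mk s = Cardinal.mk t ↔ s.encard = t.encard :=
  (Cardinal.toENat_eq_iff_of_le_aleph0 Cardinal.mk_le_aleph0 Cardinal.mk_le_aleph0).symm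

theorem Nat.encard_Iio (n : ℕ) : (Iio n).encard = n := by
  rw [← Finset.coe_range, encard_coe_eq_coe_finsetCard, Finset.card_range]

noncomputable def bicard (X : Set ℕ) : ℕ∞ × ℕ∞ := (X.encard, Xᶜ.encard)

theorem realizes_bicard : Realizes bicard Ebc := fun X Y => by
  rw [Ebc, bicard, bicard, Prod.ext_iff, Cardinal.mk_eq_mk_iff_encard_eq,
    Cardinal.mk_eq_mk_iff_encard_eq]

theorem infinite_range_bicard : (range bicard).Infinite := by
  have hinj : Injective fun n : ℕ => bicard (Iio n) := fun m n h => by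
    simpa [bicard, Nat.encard_Iio] using congrArg Prod.fst h
  exact (infinite_range_of_injective hinj).mono (range_comp_subset_range _ _)

theorem exists_surjective_realizes_ebc : ∃ d : Set ℕ → ℕ, Surjective d ∧ Realizes d Ebc :=
  realizes_bicard.exists_surjective_nat (to_countable _) infinite_range_bicard

theorem ebc_of_infinite {X Y : Set ℕ} (hX : X.Infinite) (hXc : Xᶜ.Infinite)
    (hY : Y.Infinite) (hYc : Yᶜ.Infinite) : Ebc X Y := by
  rw [← realizes_bicard, bicard, bicard, hX.encard_eq, hXc.encard_eq, hY.encard_eq,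
    hYc.encard_eq]

theorem ebc_diff_singleton {A : Set ℕ} (hA : A.Infinite) (hAc : Aᶜ.Infinite) (a : ℕ) :
    Ebc (A \ {a}) A :=
  ebc_of_infinite (hA.sdiff (finite_singleton a))
    (hAc.mono (compl_subset_compl.mpr sdiff_subset)) hA hAc

theorem not_ebc_univ_diff_singleton (b : ℕ) : ¬ Ebc (univ \ {b}) univ := by
  rw [← realizes_bicard]
  simp [bicard]

theorem infinite_range_two_mul : (range (2 * · : ℕ → ℕ)).Infinite :=
  infinite_range_of_injective (mul_right_injective₀ two_ne_zero)

theorem infinite_compl_range_two_mul : (range (2 * · : ℕ → ℕ))ᶜ.Infinite :=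
  infinite_of_forall_exists_gt fun n =>
    ⟨2 * n + 1, by rintro ⟨k, hk⟩; dsimp only at hk; omega, by omega⟩

/-- The Bicardinality Principle is not relatively elementarily equivalent: it has a
surjective realization `∂₁`, and for any such, `∂₂ X := 2 * ∂₁ X` also realizes it; writing
`A := Set.range ∂₂` and `a := ∂₂ A`, one has `∂₂ (A \ {a}) = a`, whereas with
`b := ∂₁ Set.univ` one has `∂₁ (Set.univ \ {b}) ≠ b`. Hence the Bicardinality Principle is
not naturally relatively categorical. -/
theorem bicardinality_not_relativelyElementarilyEquivalent :
    (∃ d₁ : Set ℕ → ℕ, Function.Surjective d₁ ∧ ∀ X Y : Set ℕ, d₁ X = d₁ Y ↔ Ebc X Y) ∧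
    (∀ d₁ : Set ℕ → ℕ, Function.Surjective d₁ → (∀ X Y : Set ℕ, d₁ X = d₁ Y ↔ Ebc X Y) →
      ∀ d₂ : Set ℕ → ℕ, (∀ X : Set ℕ, d₂ X = 2 * d₁ X) →
        (∀ X Y : Set ℕ, d₂ X = d₂ Y ↔ Ebc X Y) ∧
        d₂ (Set.range d₂ \ {d₂ (Set.range d₂)}) = d₂ (Set.range d₂) ∧
        d₁ (Set.univ \ {d₁ (Set.univ : Set ℕ)}) ≠ d₁ (Set.univ : Set ℕ)) := by
  refine ⟨exists_surjective_realizes_ebc, fun d₁ hsurj hreal d₂ hd₂ => ?_⟩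
  obtain rfl : d₂ = (2 * ·) ∘ d₁ := funext hd₂
  have hreal₂ : Realizes ((2 * ·) ∘ d₁) Ebc :=
    Realizes.comp hreal (mul_right_injective₀ two_ne_zero)
  refine ⟨hreal₂, (hreal₂ _ _).2 ?_, fun h => not_ebc_univ_diff_singleton _ ((hreal _ _).1 h)⟩
  rw [hsurj.range_comp]
  exact ebc_diff_singleton infinite_range_two_mul infinite_compl_range_two_mul _
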